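/- arXiv:0805.3792 — 3 statements merged into one kernel-verified Lean document; each statement's English description precedes it below -/
import Mathlib

section
/- (James blocking lemma) Let v_1, …, v_{m^2} be elements of a normed space V with ‖v_j‖ ≥ 1 for all j, and suppose for some β ≥ 1 that ‖∑_{j=1}^{m^2} t_j v_j‖ ≤ β·max_j |t_j| for all scalars (t_j). Then there exist v'_1, …, v'_m in V with ‖v'_i‖ ≥ 1 for all i such that ‖∑_{i=1}^m t_i v'_i‖ ≤ β^{1/2}·max_i |t_i| for all scalars (t_i). -/
/-!
Split the `m²` vectors into `m` rows of length `m`. Either some row already satisfies the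
estimate with constant `√β`, or every row `i` has coefficients `sᵢ` with
`‖∑ₖ sᵢₖ vᵢₖ‖ > √β ‖sᵢ‖∞`. In the second case normalise these row combinations: a combination
`∑ᵢ tᵢ v'ᵢ` of the resulting unit vectors is a combination of the original vectors with all
coefficients at most `‖t‖∞ / √β`, hence has norm at most `β ‖t‖∞ / √β = √β ‖t‖∞`.
-/

lemma ciSup_abs_eq_norm {ι : Type*} [Fintype ι] (t : ι → ℝ) : ⨆ i, |t i| = ‖t‖ := by
  cases isEmpty_or_nonempty ι
  · simp [Subsingleton.elim t 0]
  · exact (IsGreatest.pi_norm t).csSup_eq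

section

variable {V : Type*} [NormedAddCommGroup V] [NormedSpace ℝ V] {ι κ : Type*} [Fintype ι]
  [Fintype κ]

/-- `v` is dominated by the unit vector basis of `ℓ∞(ι)`; `‖t‖` is the sup norm of `ι → ℝ`. -/
def HasLinftyUpperEstimate (v : ι → V) (C : ℝ) : Prop :=
  ∀ t : ι → ℝ, ‖∑ i, t i • v i‖ ≤ C * ‖t‖

lemma HasLinftyUpperEstimate.comp_equiv {v : ι → V} {C : ℝ} (hC : 0 ≤ C)
    (hv : HasLinftyUpperEstimate v C) (e : κ ≃ ι) : HasLinftyUpperEstimate (v ∘ e) C := by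
  intro t
  calc ‖∑ k, t k • v (e k)‖ = ‖∑ i, (t ∘ e.symm) i • v i‖ := by
        rw [← e.sum_comp]; simp
    _ ≤ C * ‖t ∘ e.symm‖ := hv _
    _ ≤ C * ‖t‖ := by gcongr; exact pi_norm_comp_le t e.symm

lemma HasLinftyUpperEstimate.row_combinations {w : ι × κ → V} {C r : ℝ} (hC : 0 ≤ C)
    (hr : 0 ≤ r) (hw : HasLinftyUpperEstimate w C) (c : ι → κ → ℝ) (hc : ∀ i, ‖c i‖ ≤ r) :
    HasLinftyUpperEstimate (fun i => ∑ k, c i k • w (i, k)) (C * r) := by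
  intro t
  set u : ι × κ → ℝ := fun p => t p.1 * c p.1 p.2
  have hsum : ∑ i, t i • ∑ k, c i k • w (i, k) = ∑ p, u p • w p := by
    simp only [Fintype.sum_prod_type, Finset.smul_sum, smul_smul, u]
  have hu : ‖u‖ ≤ r * ‖t‖ := by
    refine (pi_norm_le_iff_of_nonneg (by positivity)).2 fun p => ?_
    rw [norm_mul, mul_comm r]
    exact mul_le_mul (norm_le_pi_norm t _) ((norm_le_pi_norm _ _).trans (hc _))
      (norm_nonneg _) (norm_nonneg _)
  calc ‖∑ i, t i • ∑ k, c i k • w (i, k)‖ = ‖∑ p, u p • w p‖ := by rw [hsum]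
    _ ≤ C * ‖u‖ := hw u
    _ ≤ C * r * ‖t‖ := by rw [mul_assoc]; gcongr

theorem HasLinftyUpperEstimate.exists_row_or_exists_unit {w : ι × κ → V} {a b : ℝ}
    (ha : 0 < a) (hb : 0 ≤ b) (hw : HasLinftyUpperEstimate w (a * b)) :
    (∃ i, HasLinftyUpperEstimate (fun k => w (i, k)) a) ∨
      ∃ v' : ι → V, (∀ i, v' i ∈ Submodule.span ℝ (Set.range w)) ∧ (∀ i, ‖v' i‖ = 1) ∧
        HasLinftyUpperEstimate v' b := by
  by_cases hrow : ∃ i, HasLinftyUpperEstimate (fun k => w (i, k)) a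
  · exact Or.inl hrow
  right
  simp only [HasLinftyUpperEstimate, not_exists, not_forall, not_le] at hrow
  choose s hs using hrow
  set x : ι → V := fun i => ∑ k, s i k • w (i, k)
  have hx : ∀ i, 0 < ‖x i‖ := fun i => (mul_nonneg ha.le (norm_nonneg _)).trans_lt (hs i)
  set c : ι → κ → ℝ := fun i => ‖x i‖⁻¹ • s i
  have hc : ∀ i, ‖c i‖ ≤ a⁻¹ := fun i => by
    rw [norm_smul, norm_inv, norm_norm, inv_mul_le_iff₀ (hx i), le_mul_inv_iff₀ ha, mul_comm]
    exact (hs i).le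
  have hnormalize : (fun i => ‖x i‖⁻¹ • x i) = fun i => ∑ k, c i k • w (i, k) := by
    ext i
    simp only [x, c, Finset.smul_sum, smul_smul, Pi.smul_apply, smul_eq_mul]
  refine ⟨fun i => ‖x i‖⁻¹ • x i, fun i => ?_,
    fun i => norm_smul_inv_norm (norm_pos_iff.1 (hx i)), ?_⟩
  · exact Submodule.smul_mem _ _ (Submodule.sum_mem _ fun k _ =>
      Submodule.smul_mem _ _ (Submodule.subset_span ⟨_, rfl⟩))
  · rw [hnormalize]
    convert hw.row_combinations (by positivity) (by positivity) c hc using 1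
    field_simp

end

theorem stmt_3_general {V : Type*} [NormedAddCommGroup V] [NormedSpace ℝ V]
    (m : ℕ) (β : ℝ) (hβ : 1 ≤ β)
    (v : Fin (m ^ 2) → V) (hv : ∀ j, 1 ≤ ‖v j‖)
    (hupper : ∀ t : Fin (m ^ 2) → ℝ, ‖∑ j, t j • v j‖ ≤ β * ⨆ j, |t j|) :
    ∃ v' : Fin m → V,
      (∀ i, v' i ∈ Submodule.span ℝ (Set.range v)) ∧
      (∀ i, 1 ≤ ‖v' i‖) ∧
      ∀ t : Fin m → ℝ, ‖∑ i, t i • v' i‖ ≤ Real.sqrt β * ⨆ i, |t i| := by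
  have hsqrt : 0 < Real.sqrt β := Real.sqrt_pos.2 (by linarith)
  let e : Fin m × Fin m ≃ Fin (m ^ 2) := finProdFinEquiv.trans (finCongr (sq m).symm)
  have hw : HasLinftyUpperEstimate (v ∘ e) (Real.sqrt β * Real.sqrt β) := by
    rw [Real.mul_self_sqrt (by linarith)]
    refine HasLinftyUpperEstimate.comp_equiv (by linarith) (fun t => ?_) e
    simpa only [ciSup_abs_eq_norm] using hupper t
  simp only [ciSup_abs_eq_norm]
  rcases hw.exists_row_or_exists_unit hsqrt hsqrt.le with ⟨i, hrow⟩ | ⟨v', hspan, hnorm, hv'⟩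
  · exact ⟨fun k => v (e (i, k)), fun k => Submodule.subset_span ⟨_, rfl⟩, fun k => hv _, hrow⟩
  · exact ⟨v', fun i => Submodule.span_mono (Set.range_comp_subset_range _ _) (hspan i),
      fun i => (hnorm i).ge, hv'⟩

/-- James blocking lemma: from `m²` vectors of norm at least `1` whose linear combinations
are bounded by `β·max|tⱼ|`, one extracts `m` vectors (in their span) of norm at least `1`
whose combinations are bounded by `√β·max|tᵢ|`. -/
theorem stmt_3 {V : Type*} [NormedAddCommGroup V] [NormedSpace ℝ V]
    (m : ℕ) (hm : 1 ≤ m) (β : ℝ) (hβ : 1 ≤ β)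
    (v : Fin (m ^ 2) → V) (hv : ∀ j, 1 ≤ ‖v j‖)
    (hupper : ∀ t : Fin (m ^ 2) → ℝ, ‖∑ j, t j • v j‖ ≤ β * ⨆ j, |t j|) :
    ∃ v' : Fin m → V,
      (∀ i, v' i ∈ Submodule.span ℝ (Set.range v)) ∧
      (∀ i, 1 ≤ ‖v' i‖) ∧
      ∀ t : Fin m → ℝ, ‖∑ i, t i • v' i‖ ≤ Real.sqrt β * ⨆ i, |t i| :=
  stmt_3_general m β hβ v hv hupper
end

section
/- (Dichotomy in James blocking) Let v_1, …, v_{m^2} be vectors in a normed space with ‖∑ t_j v_j‖ ≤ β·max|t_j| for all scalars, β ≥ 1, and ‖v_j‖ ≥ 1 for all j. If for every subset σ of size m there exists a choice of signs (ε_i)_{i∈σ} with ‖∑_{i∈σ} ε_i v_i‖ > β^{1/2}, then for any partition of {1,…,m^2} into m sets σ_1,…,σ_m of size m, the vectors w_j = β^{-1/2} ∑_{i∈σ_j} ε_i^{(j)} v_i (with signs chosen so that ‖∑_{i∈σ_j} ε_i^{(j)} v_i‖ > β^{1/2}) satisfy ‖w_j‖ > 1 for all j and ‖∑_j t_j w_j‖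 ≤ β^{1/2}·max_j |t_j| for all scalars (t_j). -/
/-!
The lower bound `‖wⱼ‖ > 1` is just the choice of signs. For the upper bound, disjointness of
the blocks turns `∑ⱼ tⱼ wⱼ` into `β^{-1/2} ∑ᵢ sᵢ vᵢ` with `sᵢ = ±tⱼ` for `i ∈ σⱼ`, so the
upper `ℓ∞`-estimate for the `vᵢ` gives the bound `β^{-1/2} · β · maxⱼ |tⱼ|`.
-/

open Finset

theorem exists_index_mem_iff_of_pairwise_disjoint {ι J : Type*} {σ : J → Finset ι}
    (hdisj : Pairwise fun j j' => Disjoint (σ j) (σ j')) (hcover : ∀ i, ∃ j, i ∈ σ j) :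
    ∃ f : ι → J, ∀ i j, i ∈ σ j ↔ f i = j := by
  choose f hf using hcover
  refine ⟨f, fun i j => ⟨fun hi => ?_, fun h => h ▸ hf i⟩⟩
  by_contra hne
  exact disjoint_left.1 (hdisj hne) (hf i) hi

theorem sum_sum_eq_sum_of_mem_iff {ι J M : Type*} [Fintype ι] [Fintype J]
    [AddCommMonoid M] [DecidableEq J] {σ : J → Finset ι} {f : ι → J} (hf : ∀ i j, i ∈ σ j ↔ f i = j) (g : J → ι → M) :
    ∑ j, ∑ i ∈ σ j, g j i = ∑ i, g (f i) i := by
  have hσ : ∀ j, σ j = univ.filter (f · = j) := fun j => by ext i; simp [hf]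
  calc ∑ j, ∑ i ∈ σ j, g j i = ∑ j, ∑ i ∈ σ j, g (f i) i :=
        sum_congr rfl fun j _ => sum_congr rfl fun i hi => by rw [(hf i j).1 hi]
    _ = ∑ i, g (f i) i := by simp_rw [hσ]; exact sum_fiberwise univ f _

theorem iSup_abs_comp_le {ι J : Type*} [Finite J] (t : J → ℝ) (f : ι → J) :
    ⨆ i, |t (f i)| ≤ ⨆ j, |t j| :=
  Real.iSup_le (fun i => le_ciSup (f := fun j => |t j|) (Set.finite_range _).bddAbove (f i))
    (Real.iSup_nonneg fun _ => abs_nonneg _)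

theorem norm_sum_smul_signed_blocks_le {ι J V : Type*} [Fintype ι] [Fintype J]
    [NormedAddCommGroup V] [NormedSpace ℝ V] {v : ι → V} {C : ℝ} (hC : 0 ≤ C)
    (hupper : ∀ s : ι → ℝ, ‖∑ i, s i • v i‖ ≤ C * ⨆ i, |s i|)
    {σ : J → Finset ι} (hdisj : Pairwise fun j j' => Disjoint (σ j) (σ j'))
    (hcover : ∀ i, ∃ j, i ∈ σ j) {ε : J → ι → ℝ} (hε : ∀ j i, ε j i = 1 ∨ ε j i = -1)
    (t : J → ℝ) :
    ‖∑ j, t j • ∑ i ∈ σ j, ε j i • v i‖ ≤ C * ⨆ j, |t j| := by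
  classical
  obtain ⟨f, hf⟩ := exists_index_mem_iff_of_pairwise_disjoint hdisj hcover
  have hsum : ∑ j, t j • ∑ i ∈ σ j, ε j i • v i = ∑ i, (t (f i) * ε (f i) i) • v i := by
    simp_rw [smul_sum, smul_smul]
    exact sum_sum_eq_sum_of_mem_iff hf fun j i => (t j * ε j i) • v i
  have habs : ∀ i, |t (f i) * ε (f i) i| = |t (f i)| := fun i => by
    rcases hε (f i) i with h | h <;> simp [h]
  rw [hsum]
  calc ‖∑ i, (t (f i) * ε (f i) i) • v i‖
      ≤ C * ⨆ i, |t (f i) * ε (f i) i| := hupper _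
    _ ≤ C * ⨆ j, |t j| := by
      simp_rw [habs]
      exact mul_le_mul_of_nonneg_left (iSup_abs_comp_le t f) hC

theorem stmt_4_general {V : Type*} [NormedAddCommGroup V] [NormedSpace ℝ V]
    (m : ℕ) (β : ℝ) (hβ : 1 ≤ β)
    (v : Fin (m ^ 2) → V)
    (hupper : ∀ t : Fin (m ^ 2) → ℝ, ‖∑ j, t j • v j‖ ≤ β * ⨆ j, |t j|)
    (σ : Fin m → Finset (Fin (m ^ 2)))
    (hdisj : Pairwise fun j j' => Disjoint (σ j) (σ j'))
    (hcover : ∀ i, ∃ j, i ∈ σ j)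
    (ε : Fin m → Fin (m ^ 2) → ℝ)
    (hε : ∀ j i, ε j i = 1 ∨ ε j i = -1)
    (hεnorm : ∀ j, Real.sqrt β < ‖∑ i ∈ σ j, ε j i • v i‖) :
    (∀ j, 1 < ‖(Real.sqrt β)⁻¹ • ∑ i ∈ σ j, ε j i • v i‖) ∧
      ∀ t : Fin m → ℝ,
        ‖∑ j, t j • ((Real.sqrt β)⁻¹ • ∑ i ∈ σ j, ε j i • v i)‖
          ≤ Real.sqrt β * ⨆ j, |t j| := by
  have hβ0 : 0 < β := one_pos.trans_le hβ
  have hsqrt : 0 < Real.sqrt β := Real.sqrt_pos.2 hβ0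
  refine ⟨fun j => ?_, fun t => ?_⟩
  · rw [norm_smul, norm_inv, Real.norm_of_nonneg hsqrt.le, ← div_eq_inv_mul]
    exact (one_lt_div hsqrt).2 (hεnorm j)
  · simp_rw [smul_comm (t _) (Real.sqrt β)⁻¹, ← smul_sum]
    rw [norm_smul, norm_inv, Real.norm_of_nonneg hsqrt.le, ← div_eq_inv_mul,
      div_le_iff₀ hsqrt, mul_right_comm, Real.mul_self_sqrt hβ0.le]
    exact norm_sum_smul_signed_blocks_le hβ0.le hupper hdisj hcover hε t

/-- The dichotomy step in James' blocking argument: if every `m`-element subset of the `m²`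
vectors admits signs making the norm of the signed sum exceed `√β`, then for any partition
into `m` sets of size `m` with such signs, the normalized blocks `wⱼ = β^{-1/2} ∑_{i∈σⱼ} εᵢʲ vᵢ`
have norm `> 1` and satisfy `‖∑ tⱼ wⱼ‖ ≤ √β · max|tⱼ|`. -/
theorem stmt_4 {V : Type*} [NormedAddCommGroup V] [NormedSpace ℝ V]
    (m : ℕ) (hm : 1 ≤ m) (β : ℝ) (hβ : 1 ≤ β)
    (v : Fin (m ^ 2) → V) (hv : ∀ j, 1 ≤ ‖v j‖)
    (hupper : ∀ t : Fin (m ^ 2) → ℝ, ‖∑ j, t j • v j‖ ≤ β * ⨆ j, |t j|)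
    (hsign : ∀ σ' : Finset (Fin (m ^ 2)), σ'.card = m →
      ∃ ε' : Fin (m ^ 2) → ℝ, (∀ i, ε' i = 1 ∨ ε' i = -1) ∧
        Real.sqrt β < ‖∑ i ∈ σ', ε' i • v i‖)
    (σ : Fin m → Finset (Fin (m ^ 2)))
    (hdisj : Pairwise fun j j' => Disjoint (σ j) (σ j'))
    (hcard : ∀ j, (σ j).card = m)
    (hcover : ∀ i, ∃ j, i ∈ σ j)
    (ε : Fin m → Fin (m ^ 2) → ℝ)
    (hε : ∀ j i, ε j i = 1 ∨ ε j i = -1)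
    (hεnorm : ∀ j, Real.sqrt β < ‖∑ i ∈ σ j, ε j i • v i‖) :
    (∀ j, 1 < ‖(Real.sqrt β)⁻¹ • ∑ i ∈ σ j, ε j i • v i‖) ∧
      ∀ t : Fin m → ℝ,
        ‖∑ j, t j • ((Real.sqrt β)⁻¹ • ∑ i ∈ σ j, ε j i • v i)‖
          ≤ Real.sqrt β * ⨆ j, |t j| :=
  stmt_4_general m β hβ v hupper σ hdisj hcover ε hε hεnorm
end

section
/- (Talagrand's upper ℓ_∞ extraction, statement) Let z_1, …, z_s be vectors in a normed space. Set M_1 = E‖∑_{i=1}^s ε_i z_i‖ (expectation over i.i.d. uniform signs ε_i ∈ {±1}) and w = max over all sign choices of ‖∑_{i=1}^s ε_i z_i‖. Then there exists a subset τ ⊆ {1,…,s} with |τ| ≥ s·M_1/(2w) such that for all scalars (t_i): ‖∑_{i∈τ} t_i z_i‖ ≤ 4·M_1·max_{i∈τ}|t_i|. -/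
/-!
Following Talagrand, put `T c = sup_{‖f‖ ≤ 1} ∑ cᵢ |f zᵢ|` (`absDualSup z c`). Then
`‖∑_{i∈τ} tᵢ zᵢ‖ ≤ max_τ |tᵢ| · T 1_τ` and `T 1 ≤ w`, so it suffices to find a large `τ` with
`T 1_τ ≤ 4 M₁`.

Let `δ` be a random subset containing each index independently with probability `p = 2 M₁ / w`
(weights `bernoulliWeight p`). Writing `1_δ - p` as the average of `1_δ - 1_δ'` over an independent
copy `δ'` and using convexity of `T`, then swapping `δᵢ` and `δ'ᵢ` (which preserves the law), the
differences `1_δ - 1_δ'` may be multiplied by independent signs. The Ledoux–Talagrand comparison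
theorem for the contractions `x ↦ dᵢ |x|`, `|dᵢ| ≤ 1`, then bounds the symmetrized term by `M₁`.
Hence `E T 1_δ ≤ p w + M₁ ≤ 3 M₁`, while by Chebyshev `|δ| ≥ s p / 4 = s M₁ / (2 w)` with
probability above `8/9` once `s p > 16`, so some such `δ` has `T 1_δ ≤ 4 M₁`. When `w ≤ 4 M₁`
all indices do the job, and when `s p ≤ 16` any `⌈s p / 4⌉ ≤ 4` of them do, as `‖zᵢ‖ ≤ M₁`.
-/

open Finset Function Metric

noncomputable section

variable {ι : Type*} [Fintype ι]

def boolSign (b : Bool) : ℝ := if b then 1 else -1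

lemma abs_boolSign (b : Bool) : |boolSign b| = 1 := by
  cases b <;> simp [boolSign]

section Contraction

variable {A : Type*}

lemma ciSup_add_ciSup_neg_le_of_lipschitzWith [Nonempty A] {u b : A → ℝ} {φ : ℝ → ℝ}
    (hφ : LipschitzWith 1 φ) (h₁ : BddAbove (Set.range fun α => b α + u α))
    (h₂ : BddAbove (Set.range fun α => -b α + u α)) :
    (⨆ α, φ (b α) + u α) + (⨆ α, -φ (b α) + u α)
      ≤ (⨆ α, b α + u α) + (⨆ α, -b α + u α) := by
  refine ciSup_add_ciSup_le fun α β => ?_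
  have hαβ : φ (b α) - φ (b β) ≤ |b α - b β| := by
    simpa [Real.dist_eq] using (le_abs_self _).trans (hφ.dist_le_mul (b α) (b β))
  rcases le_total (b β) (b α) with h | h
  · rw [abs_of_nonneg (sub_nonneg.2 h)] at hαβ
    linarith [le_ciSup h₁ α, le_ciSup h₂ β]
  · rw [abs_of_nonpos (sub_nonpos.2 h)] at hαβ
    linarith [le_ciSup h₁ β, le_ciSup h₂ α]

lemma bddAbove_range_sum_boolSign_mul (a : A → ι → ℝ) {B : ℝ} (hB : ∀ α i, |a α i| ≤ B)
    {φ : ι → ℝ → ℝ} (hφ : ∀ i, LipschitzWith 1 (φ i))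
    (ε : ι → Bool) : BddAbove (Set.range fun α => ∑ i, boolSign (ε i) * φ i (a α i)) := by
  refine ⟨∑ i, (|φ i 0| + B), Set.forall_mem_range.2 fun α => sum_le_sum fun i _ => ?_⟩
  have hφi : |φ i (a α i)| - |φ i 0| ≤ |a α i| := by
    simpa [Real.dist_eq] using (abs_sub_abs_le_abs_sub _ _).trans ((hφ i).dist_le_mul (a α i) 0)
  calc boolSign (ε i) * φ i (a α i) ≤ |φ i (a α i)| := by
        simpa [abs_mul, abs_boolSign] using le_abs_self (boolSign (ε i) * φ i (a α i))
    _ ≤ |φ i 0| + B := by linarith [hB α i]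

variable [DecidableEq ι]

lemma sum_update_true_add_update_false {M : Type*} [AddCommMonoid M]
    (F : (ι → Bool) → M) (j : ι) :
    ∑ ε, (F (update ε j true) + F (update ε j false)) = ∑ ε, F ε + ∑ ε, F ε := by
  have hflip : Involutive fun ε : ι → Bool => update ε j (!ε j) := fun ε => by
    ext i; by_cases h : i = j <;> simp [h]
  calc ∑ ε, (F (update ε j true) + F (update ε j false))
      = ∑ ε, (F ε + F (update ε j (!ε j))) := sum_congr rfl fun ε _ => by
        conv_rhs => rw [← update_eq_self j ε]
        cases ε j <;> simp [add_comm]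
    _ = ∑ ε, F ε + ∑ ε, F ε := by
        rw [sum_add_distrib,
          Fintype.sum_equiv hflip.toPerm (fun ε => F (update ε j !ε j)) F fun _ => rfl]

lemma sum_boolSign_update_smul {M : Type*} [AddCommMonoid M] [Module ℝ M]
    (ε : ι → Bool) (j : ι) (c : Bool) (g : ι → M) :
    ∑ i, boolSign (update ε j c i) • g i
      = boolSign c • g j + ∑ i ∈ univ.erase j, boolSign (ε i) • g i := by
  rw [← add_sum_erase _ _ (mem_univ j), update_self]
  congr 1
  exact sum_congr rfl fun i hi => by rw [update_of_ne (ne_of_mem_erase hi)]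

lemma lipschitzWith_update_id {κ X : Type*} [DecidableEq κ] [PseudoEMetricSpace X]
    {φ : κ → X → X} (hφ : ∀ i, LipschitzWith 1 (φ i)) (j i : κ) :
    LipschitzWith 1 (update φ j id i) := by
  by_cases h : i = j
  · subst h; simpa using LipschitzWith.id
  · simpa [h] using hφ i

section Comparison

variable [Nonempty A] (a : A → ι → ℝ) {B : ℝ} (hB : ∀ α i, |a α i| ≤ B)
include hB

lemma sum_ciSup_sum_boolSign_mul_le_update {φ : ι → ℝ → ℝ} (hφ : ∀ i, LipschitzWith 1 (φ i))
    (j : ι) :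
    ∑ ε : ι → Bool, ⨆ α, ∑ i, boolSign (ε i) * φ i (a α i)
      ≤ ∑ ε : ι → Bool, ⨆ α, ∑ i, boolSign (ε i) * update φ j id i (a α i) := by
  have hψ := lipschitzWith_update_id hφ j
  -- both sign vectors agree off `j`; the other coordinates form the common term `u` of the
  -- two-point inequality
  have key : ∀ ε : ι → Bool,
      (⨆ α, ∑ i, boolSign (update ε j true i) * φ i (a α i))
        + (⨆ α, ∑ i, boolSign (update ε j false i) * φ i (a α i))
      ≤ (⨆ α, ∑ i, boolSign (update ε j true i) * update φ j id i (a α i))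
        + (⨆ α, ∑ i, boolSign (update ε j false i) * update φ j id i (a α i)) := by
    intro ε
    have h₁ := bddAbove_range_sum_boolSign_mul a hB hψ (update ε j true)
    have h₂ := bddAbove_range_sum_boolSign_mul a hB hψ (update ε j false)
    have hrest : ∀ α, ∑ i ∈ univ.erase j, boolSign (ε i) • update φ j id i (a α i)
        = ∑ i ∈ univ.erase j, boolSign (ε i) • φ i (a α i) := fun α =>
      sum_congr rfl fun i hi => by rw [update_of_ne (ne_of_mem_erase hi)]
    simp only [← smul_eq_mul (a := boolSign _), sum_boolSign_update_smul, hrest,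
      update_self] at h₁ h₂ ⊢
    simp only [boolSign, if_true, Bool.false_eq_true, if_false, one_smul, neg_smul, id] at h₁ h₂ ⊢
    exact ciSup_add_ciSup_neg_le_of_lipschitzWith (hφ j) h₁ h₂
  have h := sum_le_sum fun ε (_ : ε ∈ univ) => key ε
  rw [sum_update_true_add_update_false (fun ε => ⨆ α, ∑ i, boolSign (ε i) * φ i (a α i)),
    sum_update_true_add_update_false
      (fun ε => ⨆ α, ∑ i, boolSign (ε i) * update φ j id i (a α i))] at h
  linarith

/-- The comparison theorem of Ledoux and Talagrand (contraction principle). -/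
theorem sum_ciSup_sum_boolSign_mul_le_of_lipschitzWith {φ : ι → ℝ → ℝ}
    (hφ : ∀ i, LipschitzWith 1 (φ i)) :
    ∑ ε : ι → Bool, ⨆ α, ∑ i, boolSign (ε i) * φ i (a α i)
      ≤ ∑ ε : ι → Bool, ⨆ α, ∑ i, boolSign (ε i) * a α i := by
  obtain ⟨C, hC⟩ : ∃ C : Finset ι, ∀ i ∉ C, φ i = id := ⟨univ, fun i hi => absurd (mem_univ i) hi⟩
  induction C using Finset.induction_on generalizing φ with
  | empty =>
    obtain rfl : φ = fun _ => id := funext fun i => hC i (notMem_empty i)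
    rfl
  | insert j C _ ih =>
    refine (sum_ciSup_sum_boolSign_mul_le_update a hB hφ j).trans
      (ih (lipschitzWith_update_id hφ j) fun i hi => ?_)
    by_cases h : i = j
    · subst h; simp
    · simpa [h] using hC i (by simp [h, hi])

end Comparison

end Contraction

section AbsDualSup

variable {V : Type*} [NormedAddCommGroup V] [NormedSpace ℝ V] (z : ι → V)

def rademacherSum (ε : ι → Bool) : V := ∑ i, boolSign (ε i) • z i

def absDualSup (c : ι → ℝ) : ℝ :=
  ⨆ f : closedBall (0 : StrongDual ℝ V) 1, ∑ i, c i * |f.1 (z i)|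

lemma abs_apply_le_norm (f : closedBall (0 : StrongDual ℝ V) 1) (x : V) : |f.1 x| ≤ ‖x‖ := by
  simpa using (f.1.le_opNorm x).trans
    (mul_le_of_le_one_left (norm_nonneg x) (mem_closedBall_zero_iff.1 f.2))

lemma sum_mul_abs_apply_le_absDualSup (c : ι → ℝ) (f : closedBall (0 : StrongDual ℝ V) 1) :
    ∑ i, c i * |f.1 (z i)| ≤ absDualSup z c :=
  le_ciSup (f := fun f : closedBall (0 : StrongDual ℝ V) 1 => ∑ i, c i * |f.1 (z i)|)
    ⟨∑ i, |c i| * ‖z i‖, Set.forall_mem_range.2 fun f => sum_le_sum fun i _ =>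
      (le_abs_self _).trans <| by rw [abs_mul, abs_abs]; gcongr; exact abs_apply_le_norm f _⟩ f

lemma absDualSup_le {c : ι → ℝ} {K : ℝ}
    (h : ∀ f : closedBall (0 : StrongDual ℝ V) 1, ∑ i, c i * |f.1 (z i)| ≤ K) :
    absDualSup z c ≤ K :=
  ciSup_le h

lemma absDualSup_nonneg (c : ι → ℝ) : 0 ≤ absDualSup z c := by
  simpa using sum_mul_abs_apply_le_absDualSup z c ⟨0, mem_closedBall_self zero_le_one⟩

lemma sum_abs_apply_le {w : ℝ} (hw : ∀ ε, ‖rademacherSum z ε‖ ≤ w)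
    (f : closedBall (0 : StrongDual ℝ V) 1) : ∑ i, |f.1 (z i)| ≤ w :=
  calc ∑ i, |f.1 (z i)| = f.1 (rademacherSum z fun i => decide (0 ≤ f.1 (z i))) := by
        simp only [rademacherSum, map_sum, map_smul, smul_eq_mul]
        refine sum_congr rfl fun i _ => ?_
        by_cases h : 0 ≤ f.1 (z i)
        · simp [boolSign, h, abs_of_nonneg h]
        · simp [boolSign, h, abs_of_neg (not_le.1 h)]
    _ ≤ w := (le_abs_self _).trans ((abs_apply_le_norm f _).trans (hw _))

variable [DecidableEq ι]

def rademacherMean : ℝ := (∑ ε : ι → Bool, ‖rademacherSum z ε‖) / 2 ^ Fintype.card ι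

lemma rademacherMean_nonneg : 0 ≤ rademacherMean z :=
  div_nonneg (sum_nonneg fun _ _ => norm_nonneg _) (by positivity)

lemma rademacherMean_le {w : ℝ} (hw : ∀ ε, ‖rademacherSum z ε‖ ≤ w) : rademacherMean z ≤ w := by
  rw [rademacherMean, div_le_iff₀ (by positivity)]
  calc ∑ ε : ι → Bool, ‖rademacherSum z ε‖ ≤ ∑ ε : ι → Bool, w := sum_le_sum fun ε _ => hw ε
    _ = w * 2 ^ Fintype.card ι := by simp [mul_comm]

lemma norm_le_rademacherMean (j : ι) : ‖z j‖ ≤ rademacherMean z := by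
  have hpair : ∀ ε : ι → Bool, ‖z j‖ + ‖z j‖
      ≤ ‖rademacherSum z (update ε j true)‖ + ‖rademacherSum z (update ε j false)‖ := by
    intro ε
    have h : rademacherSum z (update ε j true) - rademacherSum z (update ε j false)
        = z j + z j := by
      simp only [rademacherSum, sum_boolSign_update_smul]
      simp only [boolSign, if_true, Bool.false_eq_true, if_false, one_smul, neg_smul]
      abel
    calc ‖z j‖ + ‖z j‖ = ‖z j + z j‖ := by
          rw [← two_smul ℝ (z j), norm_smul, Real.norm_two, two_mul]
      _ ≤ _ := h ▸ norm_sub_le _ _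
  have h := sum_le_sum fun ε (_ : ε ∈ univ) => hpair ε
  rw [sum_update_true_add_update_false (fun ε => ‖rademacherSum z ε‖), ← sum_add_distrib.symm] at h
  simp only [sum_const, card_univ, Fintype.card_fun, Fintype.card_bool, nsmul_eq_mul] at h
  rw [rademacherMean, le_div_iff₀ (by positivity)]
  push_cast at h
  linarith

lemma absDualSup_indicator_le_sum_norm (τ : Finset ι) :
    absDualSup z (fun i => if i ∈ τ then 1 else 0) ≤ ∑ i ∈ τ, ‖z i‖ :=
  absDualSup_le z fun f => by
    calc ∑ i, (if i ∈ τ then 1 else 0) * |f.1 (z i)| = ∑ i ∈ τ, |f.1 (z i)| := by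
          simp [ite_mul]
      _ ≤ ∑ i ∈ τ, ‖z i‖ := sum_le_sum fun i _ => abs_apply_le_norm f _

lemma norm_sum_smul_le_mul_absDualSup (τ : Finset ι) (t : ι → ℝ) {m : ℝ} (hm0 : 0 ≤ m)
    (hm : ∀ i ∈ τ, |t i| ≤ m) :
    ‖∑ i ∈ τ, t i • z i‖ ≤ m * absDualSup z (fun i => if i ∈ τ then 1 else 0) := by
  set x := ∑ i ∈ τ, t i • z i
  rcases eq_or_ne ‖x‖ 0 with hx | hx
  · rw [hx]; exact mul_nonneg hm0 (absDualSup_nonneg z _)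
  obtain ⟨g, hg, hgx⟩ := exists_dual_vector ℝ x hx
  calc ‖x‖ = g x := by simp [hgx]
    _ = ∑ i ∈ τ, t i * g (z i) := by simp [x, map_sum]
    _ ≤ ∑ i ∈ τ, m * |g (z i)| := sum_le_sum fun i hi =>
        (le_abs_self _).trans <| by rw [abs_mul]; gcongr; exact hm i hi
    _ = m * ∑ i, (if i ∈ τ then 1 else 0) * |g (z i)| := by simp [mul_sum]
    _ ≤ m * absDualSup z (fun i => if i ∈ τ then 1 else 0) := by
        gcongr
        exact sum_mul_abs_apply_le_absDualSup z _ ⟨g, by simp [hg]⟩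

lemma sum_absDualSup_boolSign_mul_le (d : ι → ℝ) (hd : ∀ i, |d i| ≤ 1) :
    ∑ ε : ι → Bool, absDualSup z (fun i => boolSign (ε i) * d i)
      ≤ ∑ ε : ι → Bool, ‖rademacherSum z ε‖ := by
  have hφ : ∀ i, LipschitzWith 1 fun x : ℝ => d i * |x| := fun i =>
    LipschitzWith.of_dist_le_mul fun x y => by
      rw [Real.dist_eq, Real.dist_eq, ← mul_sub, abs_mul, NNReal.coe_one, one_mul]
      exact mul_le_of_le_one_left (abs_nonneg _) (hd i) |>.trans (abs_abs_sub_abs_le_abs_sub x y)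
  have hB : ∀ (f : closedBall (0 : StrongDual ℝ V) 1) i, |f.1 (z i)| ≤ ∑ j, ‖z j‖ :=
    fun f i => (abs_apply_le_norm f _).trans
      (single_le_sum (fun j _ => norm_nonneg (z j)) (mem_univ i))
  calc ∑ ε : ι → Bool, absDualSup z (fun i => boolSign (ε i) * d i)
      = ∑ ε : ι → Bool, ⨆ f : closedBall (0 : StrongDual ℝ V) 1,
          ∑ i, boolSign (ε i) * (d i * |f.1 (z i)|) := by
        simp only [absDualSup, mul_assoc]
    _ ≤ ∑ ε : ι → Bool, ⨆ f : closedBall (0 : StrongDual ℝ V) 1,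
          ∑ i, boolSign (ε i) * f.1 (z i) :=
        sum_ciSup_sum_boolSign_mul_le_of_lipschitzWith (A := closedBall (0 : StrongDual ℝ V) 1)
          (φ := fun i x => d i * |x|) (fun f i => f.1 (z i)) hB hφ
    _ ≤ ∑ ε : ι → Bool, ‖rademacherSum z ε‖ := sum_le_sum fun ε _ => ciSup_le fun f => by
        calc ∑ i, boolSign (ε i) * f.1 (z i) = f.1 (rademacherSum z ε) := by
              simp [rademacherSum, map_sum]
          _ ≤ ‖rademacherSum z ε‖ := (le_abs_self _).trans (abs_apply_le_norm f _)

end AbsDualSup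

section Bernoulli

def bernoulliWeight (p : ℝ) (δ : ι → Bool) : ℝ := ∏ i, if δ i then p else 1 - p

variable {p : ℝ}

lemma bernoulliWeight_nonneg (hp0 : 0 ≤ p) (hp1 : p ≤ 1) (δ : ι → Bool) :
    0 ≤ bernoulliWeight p δ :=
  prod_nonneg fun i _ => by split_ifs <;> linarith

variable [DecidableEq ι]

lemma sum_bernoulliWeight_mul_prod (p : ℝ) (A : Finset ι) (g : ι → Bool → ℝ) :
    ∑ δ : ι → Bool, bernoulliWeight p δ * ∏ i ∈ A, g i (δ i)
      = ∏ i ∈ A, (p * g i true + (1 - p) * g i false) := by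
  have hδ : ∀ δ : ι → Bool, bernoulliWeight p δ * ∏ i ∈ A, g i (δ i)
      = ∏ i, (if δ i then p else 1 - p) * (if i ∈ A then g i (δ i) else 1) := fun δ => by
    rw [prod_mul_distrib, prod_ite_mem, univ_inter, bernoulliWeight]
  rw [sum_congr rfl fun δ _ => hδ δ,
    ← Fintype.prod_sum fun i b => (if b then p else 1 - p) * (if i ∈ A then g i b else 1),
    ← univ_inter A, ← prod_ite_mem]
  refine prod_congr rfl fun i _ => ?_
  split_ifs <;> simp_all

lemma sum_bernoulliWeight (p : ℝ) : ∑ δ : ι → Bool, bernoulliWeight p δ = 1 := by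
  simpa using sum_bernoulliWeight_mul_prod p ∅ fun _ _ => 1

lemma sum_bernoulliWeight_mul_apply (p : ℝ) (i : ι) (h : Bool → ℝ) :
    ∑ δ : ι → Bool, bernoulliWeight p δ * h (δ i) = p * h true + (1 - p) * h false := by
  simpa using sum_bernoulliWeight_mul_prod p {i} fun _ => h

lemma sum_bernoulliWeight_mul_card_sub_sq (p : ℝ) :
    ∑ δ : ι → Bool, bernoulliWeight p δ * ((#{i | δ i} : ℝ) - Fintype.card ι * p) ^ 2
      = Fintype.card ι * (p * (1 - p)) := by
  set x : (ι → Bool) → ι → ℝ := fun δ i => (if δ i then 1 else 0) - p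
  have hcard : ∀ δ : ι → Bool, (#{i | δ i} : ℝ) - Fintype.card ι * p = ∑ i, x δ i := fun δ => by
    rw [natCast_card_filter, sum_sub_distrib]
    simp
  have hcov : ∀ i j, ∑ δ : ι → Bool, bernoulliWeight p δ * (x δ i * x δ j)
      = if i = j then p * (1 - p) else 0 := fun i j => by
    split_ifs with h
    · subst h
      rw [sum_bernoulliWeight_mul_apply p i
        fun b => ((if b then 1 else 0) - p) * ((if b then 1 else 0) - p)]
      simp only [↓reduceIte, Bool.false_eq_true, zero_sub, mul_neg, neg_mul, neg_neg]
      ring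
    · have := sum_bernoulliWeight_mul_prod p {i, j} fun _ b => (if b then 1 else 0) - p
      simp only [prod_pair h] at this
      simp only [x, this, if_true, Bool.false_eq_true, if_false]
      ring
  calc ∑ δ : ι → Bool, bernoulliWeight p δ * ((#{i | δ i} : ℝ) - Fintype.card ι * p) ^ 2
      = ∑ i, ∑ j, ∑ δ : ι → Bool, bernoulliWeight p δ * (x δ i * x δ j) := by
        simp_rw [hcard, sq, sum_mul_sum, mul_sum]
        rw [sum_comm]
        exact sum_congr rfl fun i _ => sum_comm
    _ = Fintype.card ι * (p * (1 - p)) := by simp [hcov]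

lemma sum_bernoulliWeight_card_lt_mul_le (hp0 : 0 ≤ p) (hp1 : p ≤ 1) :
    (∑ δ : ι → Bool with (#{i | δ i} : ℝ) < Fintype.card ι * p / 4, bernoulliWeight p δ)
        * (3 * (Fintype.card ι * p) / 4) ^ 2
      ≤ Fintype.card ι * (p * (1 - p)) := by
  rw [← sum_bernoulliWeight_mul_card_sub_sq, sum_mul]
  refine (sum_le_sum fun δ hδ => ?_).trans
    (sum_le_sum_of_subset_of_nonneg (filter_subset _ _) fun δ _ _ =>
      mul_nonneg (bernoulliWeight_nonneg hp0 hp1 δ) (sq_nonneg _))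
  have hδ : (#{i | δ i} : ℝ) < Fintype.card ι * p / 4 := (mem_filter.1 hδ).2
  have hnp : 0 ≤ (Fintype.card ι : ℝ) * p := mul_nonneg (Nat.cast_nonneg _) hp0
  refine mul_le_mul_of_nonneg_left ?_ (bernoulliWeight_nonneg hp0 hp1 δ)
  rw [← neg_sub, neg_sq]
  exact pow_le_pow_left₀ (by positivity) (by linarith) 2

end Bernoulli

section Symmetrization

variable [DecidableEq ι] {V : Type*} [NormedAddCommGroup V] [NormedSpace ℝ V] (z : ι → V) {p w : ℝ}

lemma sum_sum_bernoulliWeight_mul_boolSign (p : ℝ) (F : (ι → ℝ) → ℝ) (ε : ι → Bool) :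
    ∑ δ : ι → Bool, ∑ δ' : ι → Bool, bernoulliWeight p δ * bernoulliWeight p δ'
        * F (fun i => (if δ i then 1 else 0) - if δ' i then 1 else 0)
      = ∑ δ : ι → Bool, ∑ δ' : ι → Bool, bernoulliWeight p δ * bernoulliWeight p δ'
        * F (fun i => boolSign (ε i) * ((if δ i then 1 else 0) - if δ' i then 1 else 0)) := by
  let σ : (ι → Bool) × (ι → Bool) → (ι → Bool) × (ι → Bool) := fun x =>
    (fun i => if ε i then x.1 i else x.2 i, fun i => if ε i then x.2 i else x.1 i)
  have hσ : Involutive σ := fun x => by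
    ext i <;> by_cases h : ε i <;> simp [σ, h]
  simp only [← Fintype.sum_prod_type']
  refine Fintype.sum_equiv hσ.toPerm _ _ fun x => ?_
  congr 1
  · simp only [bernoulliWeight, ← prod_mul_distrib]
    refine prod_congr rfl fun i _ => ?_
    by_cases h : ε i <;> simp [σ, h, mul_comm]
  · congr 1
    ext i
    by_cases h : ε i <;> simp [σ, h, boolSign]

lemma absDualSup_indicator_le (hw : ∀ ε, ‖rademacherSum z ε‖ ≤ w) (hp0 : 0 ≤ p) (hp1 : p ≤ 1)
    (δ : ι → Bool) :
    absDualSup z (fun i => if δ i then 1 else 0)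
      ≤ ∑ δ' : ι → Bool, bernoulliWeight p δ'
          * absDualSup z (fun i => (if δ i then 1 else 0) - if δ' i then 1 else 0) + p * w :=
  absDualSup_le z fun f => by
    have hmean : ∀ i, ∑ δ' : ι → Bool, bernoulliWeight p δ'
        * ((if δ i then 1 else 0) - if δ' i then 1 else 0) = (if δ i then 1 else 0) - p := by
      intro i
      rw [sum_bernoulliWeight_mul_apply p i fun b => (if δ i then 1 else 0) - if b then 1 else 0]
      cases δ i <;> norm_num
    calc ∑ i, (if δ i then 1 else 0) * |f.1 (z i)|
        = ∑ δ' : ι → Bool, bernoulliWeight p δ'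
            * ∑ i, ((if δ i then 1 else 0) - if δ' i then 1 else 0) * |f.1 (z i)|
          + p * ∑ i, |f.1 (z i)| := by
          simp_rw [mul_sum, ← mul_assoc]
          rw [sum_comm, ← sum_add_distrib]
          refine sum_congr rfl fun i _ => ?_
          rw [← sum_mul, hmean]
          ring
      _ ≤ _ := by
          gcongr with δ'
          · exact bernoulliWeight_nonneg hp0 hp1 δ'
          · exact sum_mul_abs_apply_le_absDualSup z _ f
          · exact sum_abs_apply_le z hw f

lemma sum_bernoulliWeight_mul_absDualSup_le (hw : ∀ ε, ‖rademacherSum z ε‖ ≤ w) (hp0 : 0 ≤ p)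
    (hp1 : p ≤ 1) :
    ∑ δ : ι → Bool, bernoulliWeight p δ * absDualSup z (fun i => if δ i then 1 else 0)
      ≤ p * w + rademacherMean z := by
  have hW := bernoulliWeight_nonneg (ι := ι) hp0 hp1
  set D := ∑ δ : ι → Bool, ∑ δ' : ι → Bool, bernoulliWeight p δ * bernoulliWeight p δ'
    * absDualSup z (fun i => (if δ i then 1 else 0) - if δ' i then 1 else 0) with hD_def
  have hD : D ≤ rademacherMean z := by
    rw [rademacherMean, le_div_iff₀ (by positivity)]
    calc D * 2 ^ Fintype.card ι = ∑ ε : ι → Bool, D := by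
          rw [sum_const, card_univ, Fintype.card_fun, Fintype.card_bool, nsmul_eq_mul, mul_comm]
          push_cast; rfl
      _ = ∑ δ : ι → Bool, ∑ δ' : ι → Bool, bernoulliWeight p δ * bernoulliWeight p δ'
          * ∑ ε : ι → Bool, absDualSup z
              (fun i => boolSign (ε i) * ((if δ i then 1 else 0) - if δ' i then 1 else 0)) := by
        rw [hD_def,
          sum_congr rfl fun ε _ => sum_sum_bernoulliWeight_mul_boolSign p (absDualSup z) ε]
        simp_rw [mul_sum]
        rw [sum_comm]
        exact sum_congr rfl fun δ _ => sum_comm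
      _ ≤ ∑ δ : ι → Bool, ∑ δ' : ι → Bool, bernoulliWeight p δ * bernoulliWeight p δ'
          * ∑ ε : ι → Bool, ‖rademacherSum z ε‖ := by
        refine sum_le_sum fun δ _ => sum_le_sum fun δ' _ =>
          mul_le_mul_of_nonneg_left ?_ (mul_nonneg (hW δ) (hW δ'))
        exact sum_absDualSup_boolSign_mul_le z _ fun i => by split_ifs <;> norm_num
      _ = ∑ ε : ι → Bool, ‖rademacherSum z ε‖ := by
        simp only [← sum_mul]
        simp only [← mul_sum, sum_bernoulliWeight, mul_one]
        simp only [one_mul]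
  calc ∑ δ : ι → Bool, bernoulliWeight p δ * absDualSup z (fun i => if δ i then 1 else 0)
      ≤ ∑ δ : ι → Bool, bernoulliWeight p δ * (∑ δ' : ι → Bool, bernoulliWeight p δ'
          * absDualSup z (fun i => (if δ i then 1 else 0) - if δ' i then 1 else 0) + p * w) := by
        gcongr with δ
        · exact hW δ
        · exact absDualSup_indicator_le z hw hp0 hp1 δ
    _ = D + p * w := by
        simp_rw [hD_def, mul_add, sum_add_distrib, ← sum_mul, sum_bernoulliWeight, one_mul, mul_sum,
          mul_assoc]
    _ ≤ p * w + rademacherMean z := by linarith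

end Symmetrization

section Extraction

variable [DecidableEq ι] {V : Type*} [NormedAddCommGroup V] [NormedSpace ℝ V] (z : ι → V) {w : ℝ}

lemma exists_card_ge_absDualSup_indicator_le_of_bernoulli {p : ℝ}
    (hw : ∀ ε, ‖rademacherSum z ε‖ ≤ w) (hp0 : 0 ≤ p) (hp1 : p ≤ 1)
    (hnp : 16 < Fintype.card ι * p) (hM : 0 < rademacherMean z)
    (hpw : p * w ≤ 2 * rademacherMean z) :
    ∃ τ : Finset ι, Fintype.card ι * p / 4 ≤ τ.card ∧
      absDualSup z (fun i => if i ∈ τ then 1 else 0) ≤ 4 * rademacherMean z := by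
  set M := rademacherMean z
  set n : ℝ := (Fintype.card ι : ℝ)
  have hW := bernoulliWeight_nonneg (ι := ι) hp0 hp1
  have hbad : ∑ δ : ι → Bool with (#{i | δ i} : ℝ) < n * p / 4, bernoulliWeight p δ < 1 / 9 := by
    have hcheb := sum_bernoulliWeight_card_lt_mul_le (ι := ι) hp0 hp1
    have hvar : n * (p * (1 - p)) ≤ n * p := by
      nlinarith [mul_nonneg (Nat.cast_nonneg (α := ℝ) (Fintype.card ι)) (sq_nonneg p)]
    by_contra! h
    nlinarith [mul_le_mul_of_nonneg_right h (sq_nonneg (3 * (n * p) / 4))]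
  have hgood : 8 / 9 < ∑ δ : ι → Bool with n * p / 4 ≤ #{i | δ i}, bernoulliWeight p δ := by
    have := sum_filter_add_sum_filter_not univ
      (fun δ : ι → Bool => (#{i | δ i} : ℝ) < n * p / 4) (bernoulliWeight p)
    simp only [not_lt, sum_bernoulliWeight] at this
    linarith
  obtain ⟨δ, hδ, hlt⟩ : ∃ δ ∈ univ.filter fun δ : ι → Bool => n * p / 4 ≤ #{i | δ i},
      bernoulliWeight p δ * absDualSup z (fun i => if δ i then 1 else 0)
        < bernoulliWeight p δ * (4 * M) := by
    refine exists_lt_of_sum_lt ?_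
    calc ∑ δ : ι → Bool with n * p / 4 ≤ #{i | δ i},
          bernoulliWeight p δ * absDualSup z (fun i => if δ i then 1 else 0)
        ≤ ∑ δ : ι → Bool, bernoulliWeight p δ * absDualSup z (fun i => if δ i then 1 else 0) :=
          sum_le_sum_of_subset_of_nonneg (filter_subset _ _) fun δ _ _ =>
            mul_nonneg (hW δ) (absDualSup_nonneg z _)
      _ ≤ p * w + M := sum_bernoulliWeight_mul_absDualSup_le z hw hp0 hp1
      _ < (∑ δ : ι → Bool with n * p / 4 ≤ #{i | δ i}, bernoulliWeight p δ) * (4 * M) := by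
          nlinarith
      _ = _ := sum_mul _ _ _
  refine ⟨({i | δ i} : Finset ι), (mem_filter.1 hδ).2, ?_⟩
  simpa using (lt_of_mul_lt_mul_left hlt (hW δ)).le

theorem exists_card_ge_absDualSup_indicator_le (hw : ∀ ε, ‖rademacherSum z ε‖ ≤ w) :
    ∃ τ : Finset ι, Fintype.card ι * rademacherMean z / (2 * w) ≤ τ.card ∧
      absDualSup z (fun i => if i ∈ τ then 1 else 0) ≤ 4 * rademacherMean z := by
  set M := rademacherMean z
  set n := Fintype.card ι
  have hM0 : 0 ≤ M := rademacherMean_nonneg z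
  have hMw : M ≤ w := rademacherMean_le z hw
  have hle_n : (n : ℝ) * M / (2 * w) ≤ n :=
    div_le_of_le_mul₀ (by linarith) (Nat.cast_nonneg _) (by nlinarith [Nat.cast_nonneg (α := ℝ) n])
  rcases le_or_gt w (4 * M) with hw4 | hw4
  · refine ⟨univ, by simpa using hle_n, absDualSup_le z fun f => ?_⟩
    simpa using (sum_abs_apply_le z hw f).trans hw4
  rcases le_or_gt ((n : ℝ) * M / (2 * w)) 4 with hsmall | hlarge
  · obtain ⟨τ, -, hτ⟩ := exists_subset_card_eq (s := univ) (n := ⌈(n : ℝ) * M / (2 * w)⌉₊)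
      (by simpa using Nat.ceil_le.2 hle_n)
    refine ⟨τ, hτ ▸ Nat.le_ceil _, (absDualSup_indicator_le_sum_norm z τ).trans ?_⟩
    calc ∑ i ∈ τ, ‖z i‖ ≤ τ.card * M := by
          simpa using sum_le_card_nsmul τ _ M fun i _ => norm_le_rademacherMean z i
      _ ≤ 4 * M := by
          gcongr
          rw [hτ]
          exact_mod_cast Nat.ceil_le.2 hsmall
  · have hwpos : 0 < w := by linarith
    have hMpos : 0 < M := by
      by_contra! h
      rw [le_antisymm h hM0, mul_zero, zero_div] at hlarge
      linarith
    have hp : (n : ℝ) * (2 * M / w) / 4 = n * M / (2 * w) := by field_simp; ring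
    obtain ⟨τ, hτ, hT⟩ := exists_card_ge_absDualSup_indicator_le_of_bernoulli z hw
      (p := 2 * M / w) (by positivity) ((div_le_one hwpos).2 (by linarith)) (by linarith)
      hMpos (by field_simp; rfl)
    exact ⟨τ, hp ▸ hτ, hT⟩

end Extraction

end

/-- Talagrand's upper `ℓ∞` extraction: with `M₁` the Rademacher average and `w` the maximum
of `‖∑ εᵢ zᵢ‖` over signs, there is a subset `τ` of cardinality at least `s·M₁/(2w)` on which
all linear combinations satisfy `‖∑_{i∈τ} tᵢ zᵢ‖ ≤ 4 M₁ max_{i∈τ}|tᵢ|`. -/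
theorem stmt_5 {V : Type*} [NormedAddCommGroup V] [NormedSpace ℝ V]
    (s : ℕ) (z : Fin s → V) (M₁ w : ℝ)
    (hM₁ : M₁ = (∑ ε : Fin s → Bool, ‖∑ i, (if ε i then (1 : ℝ) else -1) • z i‖) / 2 ^ s)
    (hw : w = ⨆ ε : Fin s → Bool, ‖∑ i, (if ε i then (1 : ℝ) else -1) • z i‖) :
    ∃ τ : Finset (Fin s),
      (s : ℝ) * M₁ / (2 * w) ≤ (τ.card : ℝ) ∧
      ∀ t : Fin s → ℝ, ‖∑ i ∈ τ, t i • z i‖ ≤ 4 * M₁ * ⨆ i ∈ τ, |t i| := by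
  have hM : M₁ = rademacherMean z := by rw [hM₁, rademacherMean, Fintype.card_fin]; rfl
  have hw' : ∀ ε, ‖rademacherSum z ε‖ ≤ w := fun ε => by
    rw [hw]; exact le_ciSup (Finite.bddAbove_range fun ε => ‖rademacherSum z ε‖) ε
  obtain ⟨τ, hcard, hT⟩ := exists_card_ge_absDualSup_indicator_le z hw'
  refine ⟨τ, by simpa [hM] using hcard, fun t => ?_⟩
  have hm0 : 0 ≤ ⨆ i ∈ τ, |t i| :=
    Real.iSup_nonneg fun i => Real.iSup_nonneg fun _ => abs_nonneg _
  have hm : ∀ i ∈ τ, |t i| ≤ ⨆ i ∈ τ, |t i| := fun i hi =>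
    le_ciSup_of_le (Finite.bddAbove_range fun i => ⨆ _ : i ∈ τ, |t i|) i (by rw [ciSup_pos hi])
  calc ‖∑ i ∈ τ, t i • z i‖
      ≤ (⨆ i ∈ τ, |t i|) * absDualSup z (fun i => if i ∈ τ then 1 else 0) :=
        norm_sum_smul_le_mul_absDualSup z τ t hm0 hm
    _ ≤ 4 * M₁ * ⨆ i ∈ τ, |t i| := by rw [hM, mul_comm]; gcongr
end
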